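/- arXiv:2106.03516 — 5 statements merged into one kernel-verified Lean document; each statement's English description precedes it below -/
import Mathlib

section
/- Let p be prime and s ≥ 1. Let X, A, B, and Y be modules over ℤ/p^s, with X free and p^{s-1}·B = 0. Let f : X → A × B and g : A × B → Y be ℤ/p^s-linear maps. Let i_A : A → A × B be the inclusion a ↦ (a, 0) and π_A : A × B → A the projection. If g ∘ f is injective, then the composite g ∘ i_A ∘ π_A ∘ f : X → Y is also injective. -/
/-!
Write `h = g ∘ i_A ∘ π_A ∘ f`. Since `p^(s-1)` kills `B`, `p^(s-1) • (g ∘ f) = p^(s-1) • h`, so by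
injectivity of `g ∘ f`, `p^(s-1) • h y = 0` forces `p^(s-1) • y = 0`. In a free `ℤ/p^s`-module the
elements killed by `p^(s-1)` are multiples of `p`. Hence, by induction on `n`, every
`x ∈ ker h` is `p^n • y` for some `y` killed by `p^(s-1)` (as `p^(s-1) • h y = p^(s-1-n) • h x = 0`),
and for `n = s - 1` this says `x = 0`.
-/

theorem ZMod.natCast_dvd_of_pow_pred_mul_eq_zero {p s : ℕ} (hp : p ≠ 0) {c : ZMod (p ^ s)}
    (hc : (p : ZMod (p ^ s)) ^ (s - 1) * c = 0) : (p : ZMod (p ^ s)) ∣ c := by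
  cases s with
  | zero => exact ⟨0, Subsingleton.elim (α := ZMod 1) _ _⟩
  | succ n =>
    have : NeZero (p ^ (n + 1)) := ⟨pow_ne_zero _ hp⟩
    obtain ⟨m, rfl⟩ := ZMod.natCast_zmod_surjective c
    rw [Nat.add_sub_cancel, ← Nat.cast_pow, ← Nat.cast_mul, ZMod.natCast_eq_zero_iff,
      pow_succ] at hc
    obtain ⟨k, rfl⟩ := Nat.dvd_of_mul_dvd_mul_left (pow_pos (Nat.pos_of_ne_zero hp) n) hc
    exact ⟨k, by push_cast; rfl⟩

theorem Module.Free.exists_eq_smul_of_smul_eq_zero {R M : Type*} [CommRing R] [AddCommGroup M]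
    [Module R M] [Module.Free R M] {a π : R} (hdvd : ∀ c : R, a * c = 0 → π ∣ c) {y : M}
    (hy : a • y = 0) : ∃ z, y = π • z := by
  let b := Module.Free.chooseBasis R M
  have hcoef : ∀ i, π ∣ b.repr y i := fun i =>
    hdvd _ (by rw [← smul_eq_mul, ← Finsupp.smul_apply, ← map_smul, hy, map_zero,
      Finsupp.zero_apply])
  choose d hd using hcoef
  refine ⟨∑ i ∈ (b.repr y).support, d i • b i, ?_⟩
  conv_lhs => rw [← b.linearCombination_repr y]
  simp only [Finsupp.linearCombination_apply, Finsupp.sum, Finset.smul_sum, smul_smul, hd]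

section

variable {R X Y : Type*} [CommRing R] [AddCommGroup X] [AddCommGroup Y] [Module R X] [Module R Y]

theorem LinearMap.smul_comp_eq_smul_comp_inl_fst {A B : Type*} [AddCommGroup A] [AddCommGroup B]
    [Module R A] [Module R B] {a : R} (hB : ∀ b : B, a • b = 0) (f : X →ₗ[R] A × B)
    (g : A × B →ₗ[R] Y) :
    a • (g ∘ₗ f) = a • (g ∘ₗ inl R A B ∘ₗ fst R A B ∘ₗ f) := by
  ext x
  simp only [smul_apply, comp_apply, inl_apply, fst_apply, ← map_smul g]
  congr 1
  ext <;> simp [hB]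

theorem exists_eq_pow_smul_of_map_eq_zero {π : R} {m : ℕ}
    (hdiv : ∀ y : X, π ^ m • y = 0 → ∃ z, y = π • z) {h : X →ₗ[R] Y}
    (hpow : ∀ y, π ^ m • h y = 0 → π ^ m • y = 0) {x : X} (hx : h x = 0) :
    ∀ n ≤ m, ∃ y, x = π ^ n • y ∧ π ^ m • y = 0 := by
  have hker : ∀ n ≤ m, ∀ y, x = π ^ n • y → π ^ m • y = 0 := by
    rintro n hn y rfl
    apply hpow
    rw [map_smul] at hx
    rw [← Nat.sub_add_cancel hn, pow_add, mul_smul, hx, smul_zero]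
  intro n hn
  induction n with
  | zero =>
    have hx0 : x = π ^ 0 • x := by rw [pow_zero, one_smul]
    exact ⟨x, hx0, hker 0 hn x hx0⟩
  | succ n ih =>
    obtain ⟨y, rfl, hy⟩ := ih (Nat.le_of_succ_le hn)
    obtain ⟨z, rfl⟩ := hdiv y hy
    have hxz : π ^ n • π • z = π ^ (n + 1) • z := by rw [smul_smul, pow_succ]
    exact ⟨z, hxz, hker _ hn z hxz⟩

theorem LinearMap.injective_of_pow_smul_map_eq_zero {π : R} {m : ℕ}
    (hdiv : ∀ y : X, π ^ m • y = 0 → ∃ z, y = π • z) (h : X →ₗ[R] Y)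
    (hpow : ∀ y, π ^ m • h y = 0 → π ^ m • y = 0) : Function.Injective h := by
  refine (injective_iff_map_eq_zero h).mpr fun x hx => ?_
  obtain ⟨y, rfl, hy⟩ := exists_eq_pow_smul_of_map_eq_zero hdiv hpow hx m le_rfl
  exact hy

end

theorem factor_through_first_factor_injective_general (p : ℕ) (hp : p.Prime) (s : ℕ)
    (X A B Y : Type) [AddCommGroup X] [AddCommGroup A] [AddCommGroup B] [AddCommGroup Y]
    [Module (ZMod (p ^ s)) X] [Module (ZMod (p ^ s)) A] [Module (ZMod (p ^ s)) B]
    [Module (ZMod (p ^ s)) Y] [Module.Free (ZMod (p ^ s)) X]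
    (hB : ∀ b : B, p ^ (s - 1) • b = 0)
    (f : X →ₗ[ZMod (p ^ s)] A × B) (g : A × B →ₗ[ZMod (p ^ s)] Y)
    (hgf : Function.Injective (g ∘ₗ f)) :
    Function.Injective
      (g ∘ₗ (LinearMap.inl (ZMod (p ^ s)) A B) ∘ₗ (LinearMap.fst (ZMod (p ^ s)) A B) ∘ₗ f) := by
  have hB' : ∀ b : B, (p : ZMod (p ^ s)) ^ (s - 1) • b = 0 := fun b => by
    rw [← Nat.cast_pow, Nat.cast_smul_eq_nsmul, hB]
  refine LinearMap.injective_of_pow_smul_map_eq_zero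
    (fun y hy => Module.Free.exists_eq_smul_of_smul_eq_zero
      (fun c => ZMod.natCast_dvd_of_pow_pred_mul_eq_zero hp.ne_zero) hy) _ fun y hy => ?_
  rw [← LinearMap.smul_apply, ← LinearMap.smul_comp_eq_smul_comp_inl_fst hB', LinearMap.smul_apply,
    ← map_smul] at hy
  exact (injective_iff_map_eq_zero _).mp hgf _ hy

/-- Let `X, A, B, Y` be `ℤ/p^s`-modules with `X` free and `p^(s-1) · B = 0`. If
`g ∘ f : X → Y` is injective, then so is `g ∘ i_A ∘ π_A ∘ f`, where `i_A : A → A × B`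
is the inclusion and `π_A : A × B → A` the projection. -/
theorem factor_through_first_factor_injective (p : ℕ) (hp : p.Prime) (s : ℕ) (hs : 1 ≤ s)
    (X A B Y : Type) [AddCommGroup X] [AddCommGroup A] [AddCommGroup B] [AddCommGroup Y]
    [Module (ZMod (p ^ s)) X] [Module (ZMod (p ^ s)) A] [Module (ZMod (p ^ s)) B]
    [Module (ZMod (p ^ s)) Y] [Module.Free (ZMod (p ^ s)) X]
    (hB : ∀ b : B, p ^ (s - 1) • b = 0)
    (f : X →ₗ[ZMod (p ^ s)] A × B) (g : A × B →ₗ[ZMod (p ^ s)] Y)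
    (hgf : Function.Injective (g ∘ₗ f)) :
    Function.Injective
      (g ∘ₗ (LinearMap.inl (ZMod (p ^ s)) A B) ∘ₗ (LinearMap.fst (ZMod (p ^ s)) A B) ∘ₗ f) :=
  factor_through_first_factor_injective_general p hp s X A B Y hB f g hgf
end

section
/- Let p be prime and let s ≤ r be positive integers. Let M, M', N be abelian groups (ℤ-modules) with p^r·M = 0 and p^s·N = 0, and let ι : M → M' and φ̃ : M' → N be group homomorphisms such that the composite φ = φ̃ ∘ ι : M → N is surjective. Then Σ_{t=s}^r dim_{ℤ/p^t}(M') ≥ dim_{ℤ/p^s}(N) (as an inequality of cardinals). -/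
/-!
Write `Y_t` for the image of `p^(t-1) ι(M)` in `M' / p^t M'`; it is killed by `p`. The map `φ̃`
induces a surjection of `Y_s` onto `p^(s-1) N = N[p] ∩ p^(s-1) N` (as `p^s N = 0`), so
`dim_{ℤ/p^s}(N) ≤ dim Y_s`. Multiplication by `p` maps `Y_t` onto `Y_(t+1)`, and its kernel lies in
the image of `M'[p] ∩ p^(t-1) M'` in `M' / p^t M'`, which is a quotient of the group defining
`dim_{ℤ/p^t}(M')`; hence `dim Y_t ≤ dim_{ℤ/p^t}(M') + dim Y_(t+1)`. As `p^r M = 0`, `Y_t = 0` for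
`t > r`, and telescoping from `t = s` gives the bound.
-/

/-- The subgroup `M[p] ∩ p^k M` of an abelian group `M`, as a `ℤ`-submodule:
elements killed by `p` that are divisible by `p^k`. -/
noncomputable def pTorsionDiv (p k : ℕ) (M : Type) [AddCommGroup M] : Submodule ℤ M :=
  Submodule.torsionBy ℤ M (p : ℤ) ⊓ LinearMap.range ((p ^ k : ℤ) • (LinearMap.id : M →ₗ[ℤ] M))

/-- The quotient `(M[p] ∩ p^(t-1) M) / (M[p] ∩ p^t M)`. -/
noncomputable abbrev pDimQuot (p t : ℕ) (M : Type) [AddCommGroup M] :=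
  pTorsionDiv p (t - 1) M ⧸
    (Submodule.comap (pTorsionDiv p (t - 1) M).subtype (pTorsionDiv p t M))

lemma pDimQuot_nsmul (p t : ℕ) (M : Type) [AddCommGroup M] (x : pDimQuot p t M) :
    p • x = 0 := by
  obtain ⟨a, rfl⟩ := Submodule.Quotient.mk_surjective _ x
  have ha : (p : ℤ) • (a : M) = 0 := a.2.1
  have h2 : (p : ℤ) • a = 0 := by
    apply Subtype.ext
    simpa using ha
  rw [← natCast_zsmul, ← Submodule.Quotient.mk_smul, h2]
  simp

/-- `dim_{ℤ/p^t}(M)`, the number of `ℤ/p^t` summands of the abelian group `M`, defined as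
the `𝔽_p`-dimension of `(M[p] ∩ p^(t-1) M) / (M[p] ∩ p^t M)`. -/
noncomputable def pDim (p t : ℕ) (M : Type) [AddCommGroup M] : Cardinal :=
  letI : Module (ZMod p) (pDimQuot p t M) :=
    AddCommGroup.zmodModule (pDimQuot_nsmul p t M)
  Module.rank (ZMod p) (pDimQuot p t M)

section pRank

variable {p : ℕ} {A B E : Type} [AddCommGroup A] [AddCommGroup B] [AddCommGroup E]

variable (p A) in
noncomputable def pRank (hA : ∀ x : A, p • x = 0) : Cardinal :=
  letI := AddCommGroup.zmodModule hA
  Module.rank (ZMod p) A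

lemma pRank_le_of_surjective {hA : ∀ x : A, p • x = 0} {hB : ∀ x : B, p • x = 0}
    (f : A →ₗ[ℤ] B) (hf : Function.Surjective f) : pRank p B hB ≤ pRank p A hA :=
  letI := AddCommGroup.zmodModule hA
  letI := AddCommGroup.zmodModule hB
  (f.toAddMonoidHom.toZModLinearMap p).rank_le_of_surjective hf

lemma pRank_eq_zero_of_subsingleton [Fact (1 < p)] [Subsingleton A]
    {hA : ∀ x : A, p • x = 0} : pRank p A hA = 0 :=
  letI := AddCommGroup.zmodModule hA
  rank_subsingleton' (ZMod p) A

lemma rank_le_add_of_ker_mapsTo [Fact p.Prime] [Module (ZMod p) A] [Module (ZMod p) B]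
    {D : Submodule ℤ E} [Module (ZMod p) D] (f : A →+ B) (e : A →+ E)
    (he : Function.Injective e) (hker : ∀ a, f a = 0 → e a ∈ D) :
    Module.rank (ZMod p) A ≤ Module.rank (ZMod p) D + Module.rank (ZMod p) B := by
  let f' := f.toZModLinearMap p
  let e' : LinearMap.ker f' →+ D :=
    AddMonoidHom.mk' (fun x ↦ ⟨e x, hker x x.2⟩) fun x y ↦ Subtype.ext (e.map_add x y)
  have he' : Function.Injective e' := fun x y hxy ↦
    Subtype.ext (he (congrArg Subtype.val hxy))
  calc Module.rank (ZMod p) A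
      = Module.rank (ZMod p) (LinearMap.range f') + Module.rank (ZMod p) (LinearMap.ker f') :=
        f'.rank_range_add_rank_ker.symm
    _ ≤ Module.rank (ZMod p) B + Module.rank (ZMod p) D :=
        add_le_add (Submodule.rank_le _) ((e'.toZModLinearMap p).rank_le_of_injective he')
    _ = _ := add_comm _ _

lemma pRank_le_add_of_ker_mapsTo [Fact p.Prime] {hA : ∀ x : A, p • x = 0}
    {hB : ∀ x : B, p • x = 0} {D : Submodule ℤ E} {hD : ∀ x : D, p • x = 0}
    (f : A →ₗ[ℤ] B) (e : A →ₗ[ℤ] E) (he : Function.Injective e)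
    (hker : ∀ a, f a = 0 → e a ∈ D) :
    pRank p A hA ≤ pRank p D hD + pRank p B hB :=
  letI := AddCommGroup.zmodModule hA
  letI := AddCommGroup.zmodModule hB
  letI := AddCommGroup.zmodModule hD
  rank_le_add_of_ker_mapsTo f.toAddMonoidHom e.toAddMonoidHom he hker

end pRank

section Layers

open Submodule

noncomputable def pPowDiv (p k : ℕ) (M : Type) [AddCommGroup M] : Submodule ℤ M :=
  LinearMap.range ((p ^ k : ℤ) • (LinearMap.id : M →ₗ[ℤ] M))

noncomputable def imageModPow (p : ℕ) {M M' : Type} [AddCommGroup M] [AddCommGroup M']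
    (ι : M →+ M') (t : ℕ) : Submodule ℤ (M' ⧸ pPowDiv p t M') :=
  LinearMap.range ((pPowDiv p t M').mkQ ∘ₗ ((p ^ (t - 1) : ℤ) • ι.toIntLinearMap))

noncomputable def torsionModPow (p t : ℕ) (M' : Type) [AddCommGroup M'] :
    Submodule ℤ (M' ⧸ pPowDiv p t M') :=
  (pTorsionDiv p (t - 1) M').map (pPowDiv p t M').mkQ

noncomputable def mulModPow (p t : ℕ) (M' : Type) [AddCommGroup M'] :
    (M' ⧸ pPowDiv p t M') →ₗ[ℤ] (M' ⧸ pPowDiv p (t + 1) M') :=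
  mapQ _ _ ((p : ℤ) • LinearMap.id) fun _ ⟨y, hy⟩ ↦
    ⟨y, by simp only [← hy, LinearMap.smul_apply, LinearMap.id_apply, smul_smul, pow_succ']⟩

variable {p : ℕ} {M M' N : Type} [AddCommGroup M] [AddCommGroup M'] [AddCommGroup N]

lemma mem_pPowDiv {k : ℕ} {x : M} : x ∈ pPowDiv p k M ↔ ∃ y, (p ^ k : ℤ) • y = x :=
  Iff.rfl

lemma zsmul_mem_pPowDiv (k : ℕ) (x : M) : (p ^ k : ℤ) • x ∈ pPowDiv p k M :=
  ⟨x, rfl⟩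

lemma pPowDiv_antitone {k l : ℕ} (h : k ≤ l) : pPowDiv p l M ≤ pPowDiv p k M := by
  rintro _ ⟨y, rfl⟩
  refine ⟨(p ^ (l - k) : ℤ) • y, ?_⟩
  simp only [LinearMap.smul_apply, LinearMap.id_apply, smul_smul, ← pow_add,
    Nat.add_sub_cancel' h]

lemma imageModPow_nsmul_eq_zero (ι : M →+ M') (t : ℕ) (y : imageModPow p ι t) : p • y = 0 := by
  obtain ⟨_, m, rfl⟩ := y
  refine Subtype.ext ((Submodule.Quotient.mk_eq_zero _).mpr ?_)
  change p • (p ^ (t - 1) : ℤ) • ι m ∈ _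
  rw [← natCast_zsmul, smul_smul, ← pow_succ']
  exact pPowDiv_antitone (Nat.le_succ_of_pred_le le_rfl) (zsmul_mem_pPowDiv _ _)

lemma torsionModPow_nsmul_eq_zero (t : ℕ) (y : torsionModPow p t M') : p • y = 0 := by
  obtain ⟨_, x, hx, rfl⟩ := y
  have hpx : p • x = 0 := by rw [← natCast_zsmul]; exact hx.1
  exact Subtype.ext (by simp [← Quotient.mk_smul, hpx])

lemma pRank_torsionModPow_le_pDim (t : ℕ) :
    pRank p (torsionModPow p t M') (torsionModPow_nsmul_eq_zero t) ≤ pDim p t M' := by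
  let toTorsion : pTorsionDiv p (t - 1) M' →ₗ[ℤ] torsionModPow p t M' :=
    (((pPowDiv p t M').mkQ ∘ₗ (pTorsionDiv p (t - 1) M').subtype).codRestrict _
      fun x ↦ mem_map_of_mem x.2)
  have hker : comap (pTorsionDiv p (t - 1) M').subtype (pTorsionDiv p t M') ≤
      LinearMap.ker toTorsion := fun x hx ↦
    Subtype.ext ((Submodule.Quotient.mk_eq_zero _).mpr hx.2)
  refine pRank_le_of_surjective (liftQ _ toTorsion hker) ?_
  rintro ⟨_, x, hx, rfl⟩
  exact ⟨Submodule.Quotient.mk ⟨x, hx⟩, rfl⟩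

lemma mkQ_mem_torsionModPow {t : ℕ} (ht : 1 ≤ t) {w : M'} (hw : w ∈ pPowDiv p (t - 1) M')
    (hpw : (p : ℤ) • w ∈ pPowDiv p (t + 1) M') :
    (pPowDiv p t M').mkQ w ∈ torsionModPow p t M' := by
  obtain ⟨x, rfl⟩ := mem_pPowDiv.mp hw
  obtain ⟨u, hu⟩ := mem_pPowDiv.mp hpw
  refine ⟨(p ^ (t - 1) : ℤ) • x - (p ^ t : ℤ) • u, ⟨?_, ?_⟩, ?_⟩
  · rw [SetLike.mem_coe, mem_torsionBy_iff, smul_sub, smul_smul, smul_smul, ← pow_succ',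
      ← pow_succ', hu, smul_smul, ← pow_succ', sub_self]
  · refine mem_pPowDiv.mpr ⟨x - (p : ℤ) • u, ?_⟩
    rw [smul_sub, smul_smul, ← pow_succ, Nat.sub_add_cancel ht]
  · simp [(Submodule.Quotient.mk_eq_zero _).mpr (zsmul_mem_pPowDiv t u)]

lemma pRank_imageModPow_le [Fact p.Prime] {t : ℕ} (ht : 1 ≤ t) (ι : M →+ M') :
    pRank p (imageModPow p ι t) (imageModPow_nsmul_eq_zero ι t) ≤
      pRank p (torsionModPow p t M') (torsionModPow_nsmul_eq_zero t) +
        pRank p (imageModPow p ι (t + 1)) (imageModPow_nsmul_eq_zero ι (t + 1)) := by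
  have hmul (x : M') : mulModPow p t M' ((pPowDiv p t M').mkQ ((p ^ (t - 1) : ℤ) • x)) =
      (pPowDiv p (t + 1) M').mkQ ((p ^ (t + 1 - 1) : ℤ) • x) := by
    rw [mulModPow, mkQ_apply, mapQ_apply, LinearMap.smul_apply, LinearMap.id_apply, smul_smul,
      ← pow_succ', Nat.sub_add_cancel ht, Nat.add_sub_cancel]
    rfl
  have hmaps : ∀ y ∈ imageModPow p ι t, mulModPow p t M' y ∈ imageModPow p ι (t + 1) := by
    rintro _ ⟨m, rfl⟩
    exact ⟨m, (hmul (ι m)).symm⟩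
  refine pRank_le_add_of_ker_mapsTo ((mulModPow p t M').restrict hmaps) (Submodule.subtype _)
    Subtype.val_injective ?_
  rintro ⟨_, m, rfl⟩ hm
  have h0 : mulModPow p t M' ((pPowDiv p t M').mkQ ((p ^ (t - 1) : ℤ) • ι m)) = 0 :=
    congrArg Subtype.val hm
  exact mkQ_mem_torsionModPow ht (zsmul_mem_pPowDiv _ _)
    ((Submodule.Quotient.mk_eq_zero _).mp h0)

lemma imageModPow_eq_bot {r t : ℕ} (hM : ∀ x : M, p ^ r • x = 0) (hrt : r < t) (ι : M →+ M') :
    imageModPow p ι t = ⊥ := by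
  refine (Submodule.eq_bot_iff _).mpr ?_
  rintro _ ⟨m, rfl⟩
  obtain ⟨k, hk⟩ := Nat.exists_eq_add_of_le (Nat.le_sub_one_of_lt hrt)
  have hm : p ^ (t - 1) • m = 0 := by rw [hk, pow_add, mul_nsmul, hM, smul_zero]
  have hιm : (p ^ (t - 1) : ℤ) • ι m = 0 := by
    rw [← map_zsmul, ← Nat.cast_pow, natCast_zsmul, hm, map_zero]
  change (pPowDiv p t M').mkQ ((p ^ (t - 1) : ℤ) • ι m) = 0
  rw [hιm, map_zero]

lemma pRank_imageModPow_le_sum [Fact p.Prime] {r t : ℕ} (hM : ∀ x : M, p ^ r • x = 0)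
    (ht : 1 ≤ t) (ι : M →+ M') :
    pRank p (imageModPow p ι t) (imageModPow_nsmul_eq_zero ι t) ≤
      ∑ u ∈ Finset.Icc t r, pDim p u M' := by
  have telescope : ∀ n, t ≤ n → pRank p (imageModPow p ι t) (imageModPow_nsmul_eq_zero ι t) ≤
      ∑ u ∈ Finset.Ico t n, pDim p u M' +
        pRank p (imageModPow p ι n) (imageModPow_nsmul_eq_zero ι n) := by
    intro n hn
    induction n, hn using Nat.le_induction with
    | base => simp
    | succ n htn ih =>
      calc _ ≤ _ := ih
        _ ≤ ∑ u ∈ Finset.Ico t n, pDim p u M' + (pDim p n M' +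
              pRank p (imageModPow p ι (n + 1)) (imageModPow_nsmul_eq_zero ι (n + 1))) := by
          grw [← pRank_torsionModPow_le_pDim n]
          gcongr
          exact pRank_imageModPow_le (ht.trans htn) ι
        _ = _ := by rw [Finset.sum_Ico_succ_top htn, add_assoc]
  have hn : r < max t (r + 1) := lt_max_of_lt_right (Nat.lt_succ_self r)
  have : Subsingleton (imageModPow p ι (max t (r + 1))) :=
    Submodule.subsingleton_iff_eq_bot.mpr (imageModPow_eq_bot hM hn ι)
  have hIco : Finset.Ico t (max t (r + 1)) = Finset.Icc t r := by
    ext u; simp only [Finset.mem_Ico, Finset.mem_Icc]; omega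
  calc _ ≤ _ := telescope _ (le_max_left _ _)
    _ = _ := by rw [hIco, pRank_eq_zero_of_subsingleton, add_zero]

lemma pDim_le_pRank_imageModPow {s : ℕ} (hs : 1 ≤ s) (hN : ∀ x : N, p ^ s • x = 0)
    (ι : M →+ M') (φ : M' →+ N) (hφι : Function.Surjective (φ.comp ι)) :
    pDim p s N ≤ pRank p (imageModPow p ι s) (imageModPow_nsmul_eq_zero ι s) := by
  have hNz (y : N) : (p ^ s : ℤ) • y = 0 := by exact_mod_cast hN y
  let φbar : (M' ⧸ pPowDiv p s M') →ₗ[ℤ] N :=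
    liftQ _ φ.toIntLinearMap fun _ ⟨x, hx⟩ ↦ by
      rw [← hx, LinearMap.mem_ker]
      exact (map_zsmul φ _ x).trans (hNz _)
  have hφbar (m : M) : φbar ((pPowDiv p s M').mkQ ((p ^ (s - 1) : ℤ) • ι m)) =
      (p ^ (s - 1) : ℤ) • φ (ι m) :=
    map_zsmul φ _ _
  have hmaps : ∀ y ∈ imageModPow p ι s, φbar y ∈ pTorsionDiv p (s - 1) N := by
    rintro _ ⟨m, rfl⟩
    change φbar ((pPowDiv p s M').mkQ ((p ^ (s - 1) : ℤ) • ι m)) ∈ _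
    rw [hφbar]
    refine ⟨?_, zsmul_mem_pPowDiv _ _⟩
    rw [SetLike.mem_coe, mem_torsionBy_iff, smul_smul, ← pow_succ', Nat.sub_add_cancel hs]
    exact hNz _
  refine pRank_le_of_surjective ((mkQ _).comp (φbar.restrict hmaps))
    ((mkQ_surjective _).comp ?_)
  rintro ⟨_, ⟨_, y, rfl⟩⟩
  obtain ⟨m, rfl⟩ := hφι y
  exact ⟨⟨_, m, rfl⟩, Subtype.ext (hφbar m)⟩

end Layers

theorem sum_pDim_ge_of_factored_surjection_general (p : ℕ) (hp : p.Prime) (s r : ℕ)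
    (hs : 1 ≤ s)
    (M M' N : Type) [AddCommGroup M] [AddCommGroup M'] [AddCommGroup N]
    (hM : ∀ x : M, p ^ r • x = 0) (hN : ∀ x : N, p ^ s • x = 0)
    (ι : M →+ M') (φt : M' →+ N)
    (hsurj : Function.Surjective (φt.comp ι)) :
    pDim p s N ≤ ∑ t ∈ Finset.Icc s r, pDim p t M' := by
  have : Fact p.Prime := ⟨hp⟩
  exact (pDim_le_pRank_imageModPow hs hN ι φt hsurj).trans (pRank_imageModPow_le_sum hM hs ι)

/-- If `p^r M = 0`, `p^s N = 0` with `s ≤ r`, and a surjection `φ : M → N` factors as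
`φ = φ̃ ∘ ι` through `M'`, then `∑_{t=s}^r dim_{ℤ/p^t}(M') ≥ dim_{ℤ/p^s}(N)`. -/
theorem sum_pDim_ge_of_factored_surjection (p : ℕ) (hp : p.Prime) (s r : ℕ)
    (hs : 1 ≤ s) (hsr : s ≤ r)
    (M M' N : Type) [AddCommGroup M] [AddCommGroup M'] [AddCommGroup N]
    (hM : ∀ x : M, p ^ r • x = 0) (hN : ∀ x : N, p ^ s • x = 0)
    (ι : M →+ M') (φt : M' →+ N)
    (hsurj : Function.Surjective (φt.comp ι)) :
    pDim p s N ≤ ∑ t ∈ Finset.Icc s r, pDim p t M' :=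
  sum_pDim_ge_of_factored_surjection_general p hp s r hs M M' N hM hN ι φt hsurj
end

section
/- Let p be prime and s ≥ 1, and let φ : M → N be a ℤ/p^s-linear map of finitely generated ℤ/p^s-modules with N free over ℤ/p^s. Then dim_{ℤ/p^s}(Im(φ)) equals the 𝔽_p-dimension of the image of the induced map φ ⊗ id : M ⊗_{ℤ/p^s} ℤ/p → N ⊗_{ℤ/p^s} ℤ/p, where ℤ/p is regarded as a ℤ/p^s-module via the natural surjection ℤ/p^s → ℤ/p (the image being an 𝔽_p-vector space). -/
open Pointwise

section PDim

variable {p t : ℕ} {M : Type} [AddCommGroup M]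

theorem pTorsionDiv_eq_bot_of_pow_smul_eq_zero (h : ∀ x : M, p ^ t • x = 0) :
    pTorsionDiv p t M = ⊥ := by
  refine eq_bot_iff.mpr fun x hx => ?_
  obtain ⟨y, rfl⟩ := hx.2
  rw [Submodule.mem_bot, LinearMap.smul_apply, LinearMap.id_apply, ← Nat.cast_pow, natCast_zsmul,
    h y]

theorem pTorsionDiv_eq_range_of_pow_succ_smul_eq_zero (h : ∀ x : M, p ^ (t + 1) • x = 0) :
    pTorsionDiv p t M = LinearMap.range ((p ^ t : ℤ) • LinearMap.id : M →ₗ[ℤ] M) := by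
  refine inf_eq_right.mpr ?_
  rintro _ ⟨y, rfl⟩
  rw [Submodule.mem_torsionBy_iff, LinearMap.smul_apply, LinearMap.id_apply, smul_smul,
    ← pow_succ', ← Nat.cast_pow, natCast_zsmul, h y]

noncomputable def pDimQuotEquivRange (h : ∀ x : M, p ^ (t + 1) • x = 0) :
    pDimQuot p (t + 1) M ≃ₗ[ℤ]
      LinearMap.range ((p ^ t : ℤ) • LinearMap.id : M →ₗ[ℤ] M) :=
  (Submodule.quotEquivOfEqBot _ (by
      rw [pTorsionDiv_eq_bot_of_pow_smul_eq_zero h, Submodule.comap_bot,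
        Submodule.ker_subtype])).trans
    (LinearEquiv.ofEq _ _ (pTorsionDiv_eq_range_of_pow_succ_smul_eq_zero h))

theorem pDim_eq_rank_of_addEquiv [NeZero p] {V : Type} [AddCommGroup V] [Module (ZMod p) V]
    (e : pDimQuot p t M ≃+ V) : pDim p t M = Module.rank (ZMod p) V := by
  let _ : Module (ZMod p) (pDimQuot p t M) := AddCommGroup.zmodModule (pDimQuot_nsmul p t M)
  exact (e.toLinearEquiv (ZMod.map_smul e)).rank_eq

end PDim

namespace Submodule

variable {R : Type*} {N : Type} [CommRing R] [AddCommGroup N] [Module R N]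

theorem map_subtype_range_zsmul (K : Submodule R N) (c : ℤ) :
    (LinearMap.range (c • LinearMap.id : K →ₗ[ℤ] K)).map (K.subtype.restrictScalars ℤ) =
      ((c : R) • K).restrictScalars ℤ := by
  ext x
  constructor
  · rintro ⟨_, ⟨y, rfl⟩, rfl⟩
    exact ⟨y, y.2, Int.cast_smul_eq_zsmul R c (y : N)⟩
  · rintro ⟨y, hy, rfl⟩
    exact ⟨_, ⟨⟨y, hy⟩, rfl⟩, (Int.cast_smul_eq_zsmul R c y).symm⟩

noncomputable def pDimQuotEquivPowSMul {p t : ℕ} (K : Submodule R N)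
    (h : ∀ x : K, p ^ (t + 1) • x = 0) :
    pDimQuot p (t + 1) K ≃ₗ[ℤ] ((p : R) ^ t • K).restrictScalars ℤ :=
  (pDimQuotEquivRange h).trans <|
    (equivMapOfInjective (K.subtype.restrictScalars ℤ) K.injective_subtype _).trans <|
      LinearEquiv.ofEq _ _ (by rw [K.map_subtype_range_zsmul, Int.cast_pow, Int.cast_natCast])

end Submodule

section BaseChange

variable {R A M N : Type*} [CommSemiring R] [AddCommMonoid M] [AddCommMonoid N] [Module R M]
  [Module R N]

theorem TensorProduct.range_lid_comp_map [AddCommMonoid A] [Module R A] (ι : A →ₗ[R] R)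
    (φ : M →ₗ[R] N) :
    LinearMap.range (TensorProduct.lid R N ∘ₗ TensorProduct.map ι φ) =
      LinearMap.range ι • LinearMap.range φ := by
  rw [LinearMap.range_comp, TensorProduct.range_map, Submodule.map_map₂, Submodule.smul_eq_map₂]
  rfl

noncomputable def LinearMap.rangeBaseChangeEquiv [Semiring A] [Algebra R A] [Module.Flat R N]
    (ι : A →ₗ[R] R) (hι : Function.Injective ι) (φ : M →ₗ[R] N) :
    (LinearMap.range (φ.baseChange A)).restrictScalars R ≃ₗ[R]
      ↥(LinearMap.range ι • LinearMap.range φ) :=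
  (Submodule.equivMapOfInjective (TensorProduct.lid R N ∘ₗ ι.rTensor N)
    ((TensorProduct.lid R N).injective.comp
      (Module.Flat.rTensor_preserves_injective_linearMap ι hι)) _).trans (LinearEquiv.ofEq _ _ (by
      rw [← LinearMap.range_restrictScalars, ← LinearMap.range_comp,
        ← TensorProduct.range_lid_comp_map, LinearMap.comp_assoc,
        ← LinearMap.rTensor_comp_lTensor]
      rfl))

end BaseChange

namespace ZMod

variable {p k : ℕ}

variable (p k) in
def mulPowHom : ZMod p →+ ZMod (p ^ (k + 1)) :=
  ZMod.lift p ⟨(AddMonoidHom.mulLeft ((p : ZMod (p ^ (k + 1))) ^ k)).comp (Int.castAddHom _), by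
    change (p : ZMod (p ^ (k + 1))) ^ k * ((p : ℤ) : ZMod (p ^ (k + 1))) = 0
    rw [Int.cast_natCast, ← pow_succ, ← Nat.cast_pow, ZMod.natCast_self]⟩

theorem mulPowHom_intCast (z : ℤ) : mulPowHom p k z = (p : ZMod (p ^ (k + 1))) ^ k * z :=
  ZMod.lift_coe _ _ z

theorem mulPowHom_injective [NeZero p] : Function.Injective (mulPowHom p k) := by
  refine (injective_iff_map_eq_zero _).mpr fun c hc => ?_
  obtain ⟨z, rfl⟩ := ZMod.intCast_surjective c
  have hp : (p : ℤ) ^ k ≠ 0 := pow_ne_zero k (Int.natCast_ne_zero.mpr (NeZero.ne p))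
  rw [mulPowHom_intCast, ← Int.cast_natCast, ← Int.cast_pow, ← Int.cast_mul,
    ZMod.intCast_zmod_eq_zero_iff_dvd, Nat.cast_pow, pow_succ, mul_dvd_mul_iff_left hp] at hc
  exact (ZMod.intCast_zmod_eq_zero_iff_dvd z p).mpr hc

theorem range_mulPowHom [Module (ZMod (p ^ (k + 1))) (ZMod p)] :
    LinearMap.range ((mulPowHom p k).toZModLinearMap (p ^ (k + 1))) =
      Ideal.span {(p : ZMod (p ^ (k + 1))) ^ k} := by
  ext x
  rw [LinearMap.mem_range, Ideal.mem_span_singleton']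
  constructor
  · rintro ⟨c, rfl⟩
    obtain ⟨z, rfl⟩ := ZMod.intCast_surjective c
    exact ⟨z, by rw [AddMonoidHom.coe_toZModLinearMap, mulPowHom_intCast, mul_comm]⟩
  · rintro ⟨a, rfl⟩
    obtain ⟨z, rfl⟩ := ZMod.intCast_surjective a
    exact ⟨z, by rw [AddMonoidHom.coe_toZModLinearMap, mulPowHom_intCast, mul_comm]⟩

end ZMod

theorem pDim_range_eq_rank_range_baseChange_general (p : ℕ) (hp : p.Prime) (s : ℕ) (hs : 1 ≤ s)
    (M N : Type) [AddCommGroup M] [AddCommGroup N]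
    [Module (ZMod (p ^ s)) M] [Module (ZMod (p ^ s)) N]
    [Module.Free (ZMod (p ^ s)) N]
    [instA : Algebra (ZMod (p ^ s)) (ZMod p)]
    (φ : M →ₗ[ZMod (p ^ s)] N) :
    pDim p s (LinearMap.range φ) =
      Module.rank (ZMod p) (LinearMap.range (LinearMap.baseChange (ZMod p) φ)) := by
  have : NeZero p := ⟨hp.ne_zero⟩
  obtain ⟨k, rfl⟩ := Nat.exists_eq_add_of_le' hs
  let ι := (ZMod.mulPowHom p k).toZModLinearMap (p ^ (k + 1))
  have hι : LinearMap.range ι • LinearMap.range φ =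
      (p : ZMod (p ^ (k + 1))) ^ k • LinearMap.range φ := by
    rw [ZMod.range_mulPowHom, Submodule.ideal_span_singleton_smul]
  refine pDim_eq_rank_of_addEquiv ?_
  exact ((LinearMap.range φ).pDimQuotEquivPowSMul
      (ZModModule.char_nsmul_eq_zero (p ^ (k + 1)))).toAddEquiv.trans
    ((LinearEquiv.ofEq _ _ hι.symm).trans
      (LinearMap.rangeBaseChangeEquiv ι ZMod.mulPowHom_injective φ).symm).toAddEquiv

/-- Let `φ : M → N` be a `ℤ/p^s`-linear map of finitely generated `ℤ/p^s`-modules with `N`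
free. Regarding `ℤ/p` as a `ℤ/p^s`-algebra via the natural surjection, the `ℤ/p^s`-dimension
of `Im(φ)` equals the `𝔽_p`-dimension of the image of `φ ⊗ id : M ⊗ ℤ/p → N ⊗ ℤ/p`. -/
theorem pDim_range_eq_rank_range_baseChange (p : ℕ) (hp : p.Prime) (s : ℕ) (hs : 1 ≤ s)
    (M N : Type) [AddCommGroup M] [AddCommGroup N]
    [Module (ZMod (p ^ s)) M] [Module (ZMod (p ^ s)) N]
    [Module.Finite (ZMod (p ^ s)) M] [Module.Finite (ZMod (p ^ s)) N]
    [Module.Free (ZMod (p ^ s)) N]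
    [instA : Algebra (ZMod (p ^ s)) (ZMod p)]
    (hA : algebraMap (ZMod (p ^ s)) (ZMod p) =
      ZMod.castHom (dvd_pow_self p (Nat.one_le_iff_ne_zero.mp hs)) (ZMod p))
    (φ : M →ₗ[ZMod (p ^ s)] N) :
    pDim p s (LinearMap.range φ) =
      Module.rank (ZMod p) (LinearMap.range (LinearMap.baseChange (ZMod p) φ)) :=
  pDim_range_eq_rank_range_baseChange_general p hp s hs M N (instA := instA) φ
end

section
/- Let p be prime and let t < s be positive integers. Let φ : M → N be a ℤ/p^s-linear map of ℤ/p^s-modules with M free over ℤ/p^s, and regard ℤ/p^t as a ℤ/p^s-module via the natural surjection ℤ/p^s → ℤ/p^t. If φ is injective, then the induced map φ ⊗ id : M ⊗_{ℤ/p^s} ℤ/p^t → N ⊗_{ℤ/p^s} ℤ/p^t is injective. -/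
/-!
An injective linear map out of a module `Q` satisfying Baer's criterion has a linear retraction,
so it stays injective after any base change. Over a principal ideal ring Baer's criterion for `Q`
reduces to: `m ∈ a • Q` whenever every annihilator of `a` kills `m`. For `Q` free this is a
coordinatewise statement about the ring itself, and `ℤ/n` satisfies it: if `n / gcd(a, n)` kills
`c` then `gcd(a, n) ∣ c`, and Bézout writes `c` as a multiple of `a` modulo `n`.
-/

section

variable {R M : Type*} [CommRing R] [AddCommGroup M] [Module R M]

theorem Module.Baer.of_forall_exists_smul_eq [IsPrincipalIdealRing R]
    (h : ∀ (a : R) (m : M), (∀ r : R, r * a = 0 → r • m = 0) → ∃ m', a • m' = m) :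
    Module.Baer R M := by
  intro I g
  obtain ⟨a, rfl⟩ := (IsPrincipalIdealRing.principal I).principal
  have ha : a ∈ Ideal.span {a} := Ideal.mem_span_singleton_self a
  have hg : ∀ r : R, g ⟨r * a, Ideal.mul_mem_left _ r ha⟩ = r • g ⟨a, ha⟩ := fun r => by
    rw [← map_smul]; rfl
  obtain ⟨m', hm'⟩ := h a (g ⟨a, ha⟩) fun r hr => by
    rw [← hg, show (⟨r * a, _⟩ : Ideal.span {a}) = 0 from Subtype.ext hr, map_zero]
  refine ⟨LinearMap.toSpanSingleton R M m', fun x hx => ?_⟩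
  obtain ⟨r, rfl⟩ := Ideal.mem_span_singleton'.mp hx
  rw [hg, ← hm', LinearMap.toSpanSingleton_apply, mul_smul]

theorem Module.Free.exists_smul_eq [Module.Free R M]
    (hR : ∀ a c : R, (∀ r : R, r * a = 0 → r * c = 0) → a ∣ c)
    (a : R) (m : M) (hm : ∀ r : R, r * a = 0 → r • m = 0) : ∃ m', a • m' = m := by
  let b := Module.Free.chooseBasis R M
  have hcoord : ∀ i, a ∣ b.repr m i := fun i =>
    hR a _ fun r hr => by rw [← smul_eq_mul, ← Finsupp.smul_apply, ← map_smul, hm r hr]; simp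
  choose y hy using hcoord
  refine ⟨∑ i ∈ (b.repr m).support, y i • b i, ?_⟩
  rw [Finset.smul_sum]
  conv_rhs => rw [← b.linearCombination_repr m, Finsupp.linearCombination_apply, Finsupp.sum]
  refine Finset.sum_congr rfl fun i _ => ?_
  rw [smul_smul, ← hy]

end

theorem ZMod.dvd_of_forall_mul_eq_zero {n : ℕ} [NeZero n] {a c : ZMod n}
    (h : ∀ r : ZMod n, r * a = 0 → r * c = 0) : a ∣ c := by
  obtain ⟨A, rfl⟩ := ZMod.intCast_surjective a
  obtain ⟨C, rfl⟩ := ZMod.intCast_surjective c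
  obtain ⟨e, he⟩ := gcd_dvd_right A (n : ℤ)
  obtain ⟨f, hf⟩ := gcd_dvd_left A (n : ℤ)
  have he0 : e ≠ 0 := by
    rintro rfl
    exact NeZero.ne n (by exact_mod_cast he.trans (mul_zero _))
  have hC : gcd A (n : ℤ) ∣ C := by
    have hkill := h e (by
      rw [← Int.cast_mul, ZMod.intCast_zmod_eq_zero_iff_dvd]
      exact ⟨f, by linear_combination e * hf - f * he⟩)
    rw [← Int.cast_mul, ZMod.intCast_zmod_eq_zero_iff_dvd, he, mul_comm e] at hkill
    exact (mul_dvd_mul_iff_right he0).1 hkill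
  obtain ⟨x, y, hxy⟩ := (gcd_dvd_iff_exists A (n : ℤ)).1 hC
  exact ⟨x, by simp [hxy]⟩

instance ZMod.instIsPrincipalIdealRing (n : ℕ) : IsPrincipalIdealRing (ZMod n) :=
  .of_surjective (Int.castRingHom (ZMod n)) ZMod.intCast_surjective

theorem ZMod.baer_of_free {n : ℕ} [NeZero n] (M : Type*) [AddCommGroup M] [Module (ZMod n) M]
    [Module.Free (ZMod n) M] : Module.Baer (ZMod n) M :=
  .of_forall_exists_smul_eq <|
    Module.Free.exists_smul_eq fun _ _ => ZMod.dvd_of_forall_mul_eq_zero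

theorem LinearMap.baseChange_injective_of_leftInverse {R A M N : Type*} [CommRing R]
    [CommRing A] [Algebra R A] [AddCommGroup M] [AddCommGroup N] [Module R M] [Module R N]
    {f : M →ₗ[R] N} {g : N →ₗ[R] M} (hgf : g ∘ₗ f = LinearMap.id) :
    Function.Injective (f.baseChange A) := by
  refine Function.LeftInverse.injective (g := g.baseChange A) fun x => ?_
  rw [← LinearMap.comp_apply, ← LinearMap.baseChange_comp, hgf, LinearMap.baseChange_id,
    LinearMap.id_apply]

theorem baseChange_injective_of_injective_general (p : ℕ) (hp : p.Prime) (t s : ℕ)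
    (M N : Type) [AddCommGroup M] [AddCommGroup N]
    [Module (ZMod (p ^ s)) M] [Module (ZMod (p ^ s)) N]
    [Module.Free (ZMod (p ^ s)) M]
    [instA : Algebra (ZMod (p ^ s)) (ZMod (p ^ t))]
    (φ : M →ₗ[ZMod (p ^ s)] N) (hφ : Function.Injective φ) :
    Function.Injective (LinearMap.baseChange (ZMod (p ^ t)) φ) := by
  have : NeZero (p ^ s) := ⟨pow_ne_zero s hp.ne_zero⟩
  obtain ⟨ψ, hψ⟩ := (ZMod.baer_of_free M).extension_property φ hφ LinearMap.id
  exact LinearMap.baseChange_injective_of_leftInverse hψ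

/-- Let `t < s` and let `φ : M → N` be an injective `ℤ/p^s`-linear map with `M` free over
`ℤ/p^s`. Regarding `ℤ/p^t` as a `ℤ/p^s`-algebra via the natural surjection
`ℤ/p^s → ℤ/p^t`, the induced map `φ ⊗ id : M ⊗ ℤ/p^t → N ⊗ ℤ/p^t` is injective. -/
theorem baseChange_injective_of_injective (p : ℕ) (hp : p.Prime) (t s : ℕ)
    (ht : 1 ≤ t) (hts : t < s)
    (M N : Type) [AddCommGroup M] [AddCommGroup N]
    [Module (ZMod (p ^ s)) M] [Module (ZMod (p ^ s)) N]
    [Module.Free (ZMod (p ^ s)) M]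
    [instA : Algebra (ZMod (p ^ s)) (ZMod (p ^ t))]
    (hA : algebraMap (ZMod (p ^ s)) (ZMod (p ^ t)) =
      ZMod.castHom (pow_dvd_pow p hts.le) (ZMod (p ^ t)))
    (φ : M →ₗ[ZMod (p ^ s)] N) (hφ : Function.Injective φ) :
    Function.Injective (LinearMap.baseChange (ZMod (p ^ t)) φ) :=
  baseChange_injective_of_injective_general p hp t s M N (instA := instA) φ hφ
end

section
/- Let p be prime and s ≥ 1, and let A and B be modules over R = ℤ/p^s with A free. Let f : T(A) → T(B) be an R-linear map (not necessarily an algebra map) between the tensor algebras. Suppose that for every k ∈ ℕ and every x in the weight-k component 𝒜_k of T(A): (i) p^{s-1}·π_j(f(x)) = 0 for every j < k, and (ii) the map from 𝒜_k of T(A) to the weight-k component of T(B) given by x ↦ π_k(f(x)) is injective. Then f is injective. -/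
/-! If `f x = 0` with `x ≠ 0`, a suitable multiple `p ^ k • x` is still nonzero and lies in
`p ^ (s - 1) • T(A)`: in a free `ℤ/p^s`-module, `p ^ (s - u) • x = 0` forces `x ∈ p ^ u • T(A)`.
Take the lowest weight `K` at which this multiple `y` has a nonzero component. By (i), the
higher components of `y`, being divisible by `p ^ (s - 1)`, contribute nothing to `π_K (f y)`,
so `π_K (f y_K) = π_K (f y) = 0` and (ii) gives `y_K = 0`, a contradiction. -/

open DirectSum

theorem ZMod.natCast_mul_natCast_val_div_eq {n c d : ℕ} [NeZero n] (hn : n = c * d)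
    {a : ZMod n} (ha : (c : ZMod n) * a = 0) : (d : ZMod n) * ((a.val / d : ℕ) : ZMod n) = a := by
  have hc : c ≠ 0 := left_ne_zero_of_mul (hn ▸ NeZero.ne n)
  have hca : c * d ∣ c * a.val := by
    rw [← hn, ← ZMod.natCast_eq_zero_iff]
    push_cast [ZMod.natCast_zmod_val]
    exact ha
  have hda : d ∣ a.val := (Nat.mul_dvd_mul_iff_left (Nat.pos_of_ne_zero hc)).mp hca
  rw [← Nat.cast_mul, Nat.mul_div_cancel' hda, ZMod.natCast_zmod_val]

theorem Module.Free.exists_eq_nsmul_of_nsmul_eq_zero {n c d : ℕ} [NeZero n] (hn : n = c * d)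
    {M : Type*} [AddCommGroup M] [Module (ZMod n) M] [Module.Free (ZMod n) M] {x : M}
    (hx : c • x = 0) : ∃ z : M, x = d • z := by
  let b := Module.Free.chooseBasis (ZMod n) M
  have hcoord (i) : (c : ZMod n) * b.repr x i = 0 := by
    simpa using congr(b.repr $hx i)
  refine ⟨b.repr.symm ((b.repr x).mapRange (fun a => ((a.val / d : ℕ) : ZMod n)) (by simp)), ?_⟩
  refine b.repr.injective (Finsupp.ext fun i => ?_)
  simp [ZMod.natCast_mul_natCast_val_div_eq hn (hcoord i)]

theorem Module.Free.injective_of_map_nsmul_pow_pred_eq_zero {p s : ℕ} [NeZero (p ^ s)]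
    {M N : Type*} [AddCommGroup M] [Module (ZMod (p ^ s)) M] [Module.Free (ZMod (p ^ s)) M]
    [AddCommGroup N] (f : M →+ N) (hf : ∀ z : M, f (p ^ (s - 1) • z) = 0 → p ^ (s - 1) • z = 0) :
    Function.Injective f := by
  refine (injective_iff_map_eq_zero f).mpr fun x hx => ?_
  suffices h : ∀ u ≤ s, p ^ (s - u) • x = 0 by simpa using h s le_rfl
  intro u
  induction u with
  | zero =>
    intro _
    rw [Nat.sub_zero, ← Nat.cast_smul_eq_nsmul (ZMod (p ^ s)), ZMod.natCast_self, zero_smul]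
  | succ u ih =>
    intro hu
    obtain ⟨z, rfl⟩ := Module.Free.exists_eq_nsmul_of_nsmul_eq_zero
      (by rw [← pow_add, Nat.sub_add_cancel (by omega)]) (ih (by omega))
    have hz : p ^ (s - (u + 1)) • p ^ u • z = p ^ (s - 1) • z := by
      rw [smul_smul, ← pow_add]; congr 2; omega
    rw [hz]
    exact hf z (by rw [← hz, map_nsmul f _ (p ^ u • z), hx, smul_zero])

theorem DirectSum.decompose_nsmul {ι M σ : Type*} [DecidableEq ι] [AddCommMonoid M]
    [SetLike σ M] [AddSubmonoidClass σ M] (ℳ : ι → σ) [Decomposition ℳ] (n : ℕ) (x : M) :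
    decompose ℳ (n • x) = n • decompose ℳ x :=
  map_nsmul (decomposeAddEquiv ℳ) n x

theorem DirectSum.nsmul_eq_zero_of_map_eq_zero_of_leading_terms {ι R M N : Type*}
    [LinearOrder ι] [Semiring R]
    [AddCommMonoid M] [Module R M] [AddCommMonoid N] [Module R N]
    (𝒜 : ι → Submodule R M) [Decomposition 𝒜] (ℬ : ι → Submodule R N) [Decomposition ℬ]
    (f : M →ₗ[R] N) (c : ℕ)
    (hlow : ∀ k, ∀ x ∈ 𝒜 k, ∀ j < k, c • (decompose ℬ (f x) j : N) = 0)
    (hlead : ∀ k, Set.InjOn (fun x => (decompose ℬ (f x) k : N)) (𝒜 k))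
    {z : M} (hz : f (c • z) = 0) : c • z = 0 := by
  classical
  set y := c • z
  by_contra hy
  have hsupp : (decompose 𝒜 y).support.Nonempty := by
    rw [Finset.nonempty_iff_ne_empty]
    intro hempty
    apply hy
    rw [← sum_support_decompose 𝒜 y, hempty, Finset.sum_empty]
  set K := (decompose 𝒜 y).support.min' hsupp
  have hK : K ∈ (decompose 𝒜 y).support := Finset.min'_mem _ _
  have hhigher : ∀ k ∈ (decompose 𝒜 y).support, k ≠ K →
      (decompose ℬ (f (decompose 𝒜 y k)) K : N) = 0 := by
    intro k hk hkK
    have hKk : K < k := lt_of_le_of_ne (Finset.min'_le _ _ hk) (Ne.symm hkK)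
    rw [decompose_nsmul, DFinsupp.smul_apply, AddSubmonoidClass.coe_nsmul, map_nsmul,
      decompose_nsmul]
    exact hlow k _ (decompose 𝒜 z k).2 K hKk
  have hleading : (decompose ℬ (f (decompose 𝒜 y K)) K : N) = decompose ℬ (f 0) K :=
    calc (decompose ℬ (f (decompose 𝒜 y K)) K : N)
        = ∑ k ∈ (decompose 𝒜 y).support, (decompose ℬ (f (decompose 𝒜 y k)) K : N) :=
          (Finset.sum_eq_single_of_mem K hK hhigher).symm
      _ = decompose ℬ (f y) K := by
          rw [← Submodule.coe_sum, ← DFinsupp.finsetSum_apply, ← decompose_sum, ← map_sum,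
            sum_support_decompose]
      _ = decompose ℬ (f 0) K := by rw [hz, map_zero f]
  exact (decompose 𝒜 y).mem_support_iff.mp hK
    (Subtype.ext (hlead K (decompose 𝒜 y K).2 (zero_mem _) hleading))

open TensorAlgebra in
theorem tensorAlgebra_map_injective_of_leading_terms_general (p : ℕ) (hp : p.Prime) (s : ℕ)
    (A B : Type) [AddCommGroup A] [AddCommGroup B]
    [Module (ZMod (p ^ s)) A] [Module (ZMod (p ^ s)) B]
    [Module.Free (ZMod (p ^ s)) A]
    (f : TensorAlgebra (ZMod (p ^ s)) A →ₗ[ZMod (p ^ s)] TensorAlgebra (ZMod (p ^ s)) B)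
    (hi : ∀ k : ℕ, ∀ x ∈ (LinearMap.range
        (ι (ZMod (p ^ s)) : A →ₗ[ZMod (p ^ s)] TensorAlgebra (ZMod (p ^ s)) A) ^ k),
      ∀ j < k, p ^ (s - 1) • GradedAlgebra.proj
        ((LinearMap.range (ι (ZMod (p ^ s)) :
          B →ₗ[ZMod (p ^ s)] TensorAlgebra (ZMod (p ^ s)) B) ^ ·) : ℕ → Submodule _ _) j
        (f x) = 0)
    (hii : ∀ k : ℕ, Set.InjOn
      (fun x => GradedAlgebra.proj
        ((LinearMap.range (ι (ZMod (p ^ s)) :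
          B →ₗ[ZMod (p ^ s)] TensorAlgebra (ZMod (p ^ s)) B) ^ ·) : ℕ → Submodule _ _) k
        (f x))
      ((LinearMap.range (ι (ZMod (p ^ s)) :
          A →ₗ[ZMod (p ^ s)] TensorAlgebra (ZMod (p ^ s)) A) ^ k : Submodule _ _) : Set _)) :
    Function.Injective f := by
  have : NeZero (p ^ s) := ⟨pow_ne_zero s hp.ne_zero⟩
  simp only [GradedAlgebra.proj_apply] at hi hii
  exact Module.Free.injective_of_map_nsmul_pow_pred_eq_zero f.toAddMonoidHom fun _ hz =>
    DirectSum.nsmul_eq_zero_of_map_eq_zero_of_leading_terms _ _ f _ hi hii hz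

open TensorAlgebra in
/-- Let `R = ℤ/p^s` and let `f : T(A) → T(B)` be an `R`-linear map between tensor algebras,
with `A` free. Suppose that for every `k` and every `x` in the weight-`k` component of
`T(A)`: (i) `p^(s-1) • π_j (f x) = 0` for all `j < k`, and (ii) `x ↦ π_k (f x)` is
injective on the weight-`k` component. Then `f` is injective. -/
theorem tensorAlgebra_map_injective_of_leading_terms (p : ℕ) (hp : p.Prime) (s : ℕ)
    (hs : 1 ≤ s) (A B : Type) [AddCommGroup A] [AddCommGroup B]
    [Module (ZMod (p ^ s)) A] [Module (ZMod (p ^ s)) B]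
    [Module.Free (ZMod (p ^ s)) A]
    (f : TensorAlgebra (ZMod (p ^ s)) A →ₗ[ZMod (p ^ s)] TensorAlgebra (ZMod (p ^ s)) B)
    (hi : ∀ k : ℕ, ∀ x ∈ (LinearMap.range
        (ι (ZMod (p ^ s)) : A →ₗ[ZMod (p ^ s)] TensorAlgebra (ZMod (p ^ s)) A) ^ k),
      ∀ j < k, p ^ (s - 1) • GradedAlgebra.proj
        ((LinearMap.range (ι (ZMod (p ^ s)) :
          B →ₗ[ZMod (p ^ s)] TensorAlgebra (ZMod (p ^ s)) B) ^ ·) : ℕ → Submodule _ _) j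
        (f x) = 0)
    (hii : ∀ k : ℕ, Set.InjOn
      (fun x => GradedAlgebra.proj
        ((LinearMap.range (ι (ZMod (p ^ s)) :
          B →ₗ[ZMod (p ^ s)] TensorAlgebra (ZMod (p ^ s)) B) ^ ·) : ℕ → Submodule _ _) k
        (f x))
      ((LinearMap.range (ι (ZMod (p ^ s)) :
          A →ₗ[ZMod (p ^ s)] TensorAlgebra (ZMod (p ^ s)) A) ^ k : Submodule _ _) : Set _)) :
    Function.Injective f :=
  tensorAlgebra_map_injective_of_leading_terms_general p hp s A B f hi hii
end
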